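/- Assume p + q < 1. Let f ∈ L¹(Ω,μ) and let f̃ be a boundary extension of f. Then f̃ is μ-integrable on all of Ω̃ and ∫_{Ω̃} |f̃| dμ ≤ (1 − p − q)⁻¹ · ‖f‖_{L¹(Ω)}. -/

import Mathlib

open MeasureTheory Set Filter Topology

/-- The measure `ℓ(·,v)` on `V` given by
`ℓ(dw,v) = p w v⁻¹ k(w,v) ν(dw) + q δ_v(dw)`. -/
noncomputable def ell (p q : ℝ) (k : ℝ → ℝ → ℝ) (ν : Measure ℝ) (V : Set ℝ) (v : ℝ) :
    Measure ℝ :=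
  (ν.restrict V).withDensity (fun w => ENNReal.ofReal (p * w * v⁻¹ * k w v)) +
    (ENNReal.ofReal q) • Measure.dirac v

/-- The sets `Ω₀ = Ω = (0,1) × V` and, for `i ≥ 1`,
`Ω_i = {(x,v) : v ∈ V, −i v b⁻¹ < x ≤ −(i−1) v b⁻¹}`. -/
def Omi (b : ℝ) (V : Set ℝ) : ℕ → Set (ℝ × ℝ)
  | 0 => (Set.Ioo (0 : ℝ) 1) ×ˢ V
  | (i + 1) =>
      {z : ℝ × ℝ | z.2 ∈ V ∧ -(((i : ℝ) + 1) * z.2 * b⁻¹) < z.1 ∧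
        z.1 ≤ -((i : ℝ) * z.2 * b⁻¹)}

/-- `Γ_j = ⋃_{i=0}^{j} Ω_i`. -/
def Gam (b : ℝ) (V : Set ℝ) (j : ℕ) : Set (ℝ × ℝ) :=
  ⋃ i ∈ Finset.range (j + 1), Omi b V i

/-- A measurable function `f̃ : Ω̃ → ℝ` (modelled on all of `ℝ × ℝ`, with
`Ω̃ = (−∞,1) × V`), μ-integrable on each `Γ_j`, is a boundary extension of `f` if
`f̃ = f` a.e. on `{x > 0}` and, a.e. on `{x ≤ 0}`, the function
`w ↦ f̃(1 + x w v⁻¹, w)` is `ℓ(·,v)`-integrable with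
`f̃(x,v) = ∫_V f̃(1 + x w v⁻¹, w) ℓ(dw,v)`. -/
def IsBoundaryExtension (b p q : ℝ) (k : ℝ → ℝ → ℝ) (ν : Measure ℝ) (V : Set ℝ)
    (f ftil : ℝ × ℝ → ℝ) : Prop :=
  Measurable ftil ∧
  (∀ j : ℕ, IntegrableOn ftil (Gam b V j) ((volume : Measure ℝ).prod ν)) ∧
  (∀ᵐ z ∂(((volume : Measure ℝ).prod ν).restrict ((Set.Iio (1 : ℝ)) ×ˢ V)),
    0 < z.1 → ftil z = f z) ∧
  (∀ᵐ z ∂(((volume : Measure ℝ).prod ν).restrict ((Set.Iio (1 : ℝ)) ×ˢ V)),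
    z.1 ≤ 0 →
      Integrable (fun w => ftil (1 + z.1 * w * z.2⁻¹, w)) (ell p q k ν V z.2) ∧
      ftil z = ∫ w, ftil (1 + z.1 * w * z.2⁻¹, w) ∂(ell p q k ν V z.2))

/-!
Put `G = |f̃|`, so that `G(x,v) ≤ ∫ G(1 + x w v⁻¹, w) ℓ(dw,v)` for `x ≤ 0`. The substitution
`y = 1 + x w v⁻¹` maps the `v`-slice of `Ω_{j+1}` onto the `w`-slice of the translate
`Ω_{j+1} + (1,0)` with Jacobian `v w⁻¹`, which turns the density `p w v⁻¹ k(w,v)` into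
`p k(w,v)`, a kernel of total `v`-mass `p`. Hence `∫_{Ω_{j+1}} G ≤ (p+q) ∫_{Ω_{j+1}+(1,0)} G`.
For `j < n` these translates are disjoint and lie in `Γ_n` up to the null line `x = 1`, so
`T_n = ∫_{Γ_n} G` satisfies `T_n ≤ T_0 + (p+q) T_n`. As `T_n < ∞`, this gives
`T_n ≤ (1-p-q)⁻¹ T_0`; monotone convergence along `Γ_n ↑ Ω̃` concludes.
-/

open scoped ENNReal

lemma map_volume_add_mul_right (s : ℝ) {c : ℝ} (hc : c ≠ 0) :
    Measure.map (fun x => s + x * c) volume = ENNReal.ofReal |c⁻¹| • volume := by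
  have : (fun x : ℝ => s + x * c) = (s + ·) ∘ (· * c) := rfl
  rw [this, ← Measure.map_map (measurable_const_add s) (measurable_mul_const c),
    Real.map_volume_mul_right hc, Measure.map_smul, Measure.IsAddLeftInvariant.map_add_left_eq_self]

lemma setLIntegral_comp_add_mul_right {h : ℝ → ℝ≥0∞} (hh : Measurable h) {A : Set ℝ}
    (hA : MeasurableSet A) (s : ℝ) {c : ℝ} (hc : c ≠ 0) :
    ∫⁻ x in (fun x => s + x * c) ⁻¹' A, h (s + x * c) =
      ENNReal.ofReal |c⁻¹| * ∫⁻ y in A, h y := by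
  rw [← setLIntegral_map hA hh (by fun_prop), map_volume_add_mul_right s hc,
    Measure.restrict_smul, lintegral_smul_measure, smul_eq_mul]

section Slices

variable {α β : Type*} [MeasurableSpace α] [MeasurableSpace β] {μ : Measure α} {ν : Measure β}
  {J : β → Set α} {g : α × β → ℝ≥0∞}

lemma setLIntegral_slice_eq_lintegral_indicator (hJ : MeasurableSet {z : α × β | z.1 ∈ J z.2})
    (v : β) :
    ∫⁻ x in J v, g (x, v) ∂μ = ∫⁻ x, {z : α × β | z.1 ∈ J z.2}.indicator g (x, v) ∂μ := by
  have hJv : MeasurableSet (J v) := measurable_prodMk_right hJ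
  rw [← lintegral_indicator hJv]
  exact lintegral_congr fun x => indicator_comp_right (s := {z : α × β | z.1 ∈ J z.2}) (·, v)

lemma measurable_setLIntegral_slice [SFinite μ] (hJ : MeasurableSet {z : α × β | z.1 ∈ J z.2})
    (hg : Measurable g) : Measurable fun v => ∫⁻ x in J v, g (x, v) ∂μ := by
  simp_rw [setLIntegral_slice_eq_lintegral_indicator hJ]
  exact (hg.indicator hJ).lintegral_prod_left'

lemma setLIntegral_prod_eq_lintegral_slice [SFinite μ] [SFinite ν] (V : Set β)
    (hJ : MeasurableSet {z : α × β | z.1 ∈ J z.2}) (hg : Measurable g) :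
    ∫⁻ z in {z : α × β | z.2 ∈ V ∧ z.1 ∈ J z.2}, g z ∂(μ.prod ν) =
      ∫⁻ v in V, ∫⁻ x in J v, g (x, v) ∂μ ∂ν := by
  have hS : {z : α × β | z.2 ∈ V ∧ z.1 ∈ J z.2} = {z | z.1 ∈ J z.2} ∩ univ ×ˢ V := by
    ext z; simp [and_comm]
  rw [hS, ← Measure.restrict_restrict hJ, ← Measure.prod_restrict, Measure.restrict_univ,
    ← lintegral_indicator hJ, lintegral_prod_symm' _ (hg.indicator hJ)]
  simp_rw [setLIntegral_slice_eq_lintegral_indicator hJ]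

end Slices

lemma lintegral_ofReal_eq_one {α : Type*} [MeasurableSpace α] {μ : Measure α} {f : α → ℝ}
    (hf : 0 ≤ᵐ[μ] f) (h : ∫ x, f x ∂μ = 1) : ∫⁻ x, ENNReal.ofReal (f x) ∂μ = 1 := by
  rw [← ofReal_integral_eq_lintegral_ofReal (Integrable.of_integral_ne_zero (by simp [h])) hf,
    h, ENNReal.ofReal_one]

lemma lintegral_lintegral_ofReal_mul_eq {α : Type*} [MeasurableSpace α] {μ : Measure α}
    [SFinite μ] {k : α → α → ℝ} (hkm : Measurable (Function.uncurry k))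
    (hknn : ∀ w v, 0 ≤ k w v) (hk1 : ∀ᵐ w ∂μ, ∫ v, k w v ∂μ = 1) {H : α → ℝ≥0∞}
    (hH : Measurable H) :
    ∫⁻ v, ∫⁻ w, ENNReal.ofReal (k w v) * H w ∂μ ∂μ = ∫⁻ w, H w ∂μ := by
  rw [lintegral_lintegral_swap
    ((ENNReal.measurable_ofReal.comp (hkm.comp measurable_swap)).mul
      (hH.comp measurable_snd)).aemeasurable]
  refine lintegral_congr_ae (hk1.mono fun w hw => ?_)
  have hkw : Measurable fun v => ENNReal.ofReal (k w v) :=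
    ENNReal.measurable_ofReal.comp (hkm.comp measurable_prodMk_left)
  show ∫⁻ v, ENNReal.ofReal (k w v) * H w ∂μ = H w
  rw [lintegral_mul_const _ hkw, lintegral_ofReal_eq_one (ae_of_all _ (hknn w)) hw, one_mul]

section Geometry

variable {b : ℝ} {V : Set ℝ}

def layer (b : ℝ) (j : ℕ) (v : ℝ) : Set ℝ :=
  Ioc (-(((j : ℝ) + 1) * v * b⁻¹)) (-((j : ℝ) * v * b⁻¹))

/-- The translate `Ω_{j+1} + (1,0)`. -/
def strip (b : ℝ) (V : Set ℝ) (j : ℕ) : Set (ℝ × ℝ) :=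
  {z | z.2 ∈ V ∧ z.1 ∈ (· - 1) ⁻¹' layer b j z.2}

lemma mul_inv_pos_of_mem (hV : V ⊆ Ioo 0 b) {v : ℝ} (hv : v ∈ V) : 0 < v * b⁻¹ :=
  mul_pos (hV hv).1 (inv_pos.mpr ((hV hv).1.trans (hV hv).2))

lemma mul_inv_lt_one_of_mem (hV : V ⊆ Ioo 0 b) {v : ℝ} (hv : v ∈ V) : v * b⁻¹ < 1 :=
  (div_lt_one₀ ((hV hv).1.trans (hV hv).2)).mpr (hV hv).2

lemma Omi_succ_eq (j : ℕ) : Omi b V (j + 1) = {z | z.2 ∈ V ∧ z.1 ∈ layer b j z.2} := rfl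

lemma measurableSet_setOf_mem_layer (j : ℕ) : MeasurableSet {z : ℝ × ℝ | z.1 ∈ layer b j z.2} :=
  (measurableSet_lt (by fun_prop) measurable_fst).inter
    (measurableSet_le measurable_fst (by fun_prop))

lemma measurableSet_setOf_sub_one_mem_layer (j : ℕ) :
    MeasurableSet {z : ℝ × ℝ | z.1 ∈ (· - 1) ⁻¹' layer b j z.2} :=
  (measurableSet_setOf_mem_layer j).preimage
    (by fun_prop : Measurable fun z : ℝ × ℝ => (z.1 - 1, z.2))

lemma measurableSet_strip (hVm : MeasurableSet V) (j : ℕ) : MeasurableSet (strip b V j) :=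
  (hVm.preimage measurable_snd).inter (measurableSet_setOf_sub_one_mem_layer j)

lemma layer_subset_Iic (hb : 0 ≤ b) {v : ℝ} (hv : 0 ≤ v) (j : ℕ) : layer b j v ⊆ Iic 0 :=
  fun _ hx => hx.2.trans (neg_nonpos.mpr (by positivity))

lemma mul_mem_layer_iff {v w : ℝ} (hv : 0 < v) (hw : 0 < w) {j : ℕ} {x : ℝ} :
    x * (w * v⁻¹) ∈ layer b j w ↔ x ∈ layer b j v := by
  have hc : 0 < w * v⁻¹ := by positivity
  have scale : ∀ t : ℝ, -(t * w * b⁻¹) = -(t * v * b⁻¹) * (w * v⁻¹) := fun t => by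
    field_simp
  simp only [layer, mem_Ioc, scale, mul_lt_mul_iff_left₀ hc, mul_le_mul_iff_left₀ hc]

lemma pairwise_disjoint_strip (hV : V ⊆ Ioo 0 b) :
    Pairwise (Function.onFun Disjoint (strip b V)) := by
  refine (pairwise_disjoint_on _).mpr fun i j hij => disjoint_left.mpr ?_
  rintro ⟨y, w⟩ ⟨hw, hi⟩ ⟨-, hj⟩
  have hc := mul_inv_pos_of_mem hV hw
  have hij' : (i : ℝ) + 1 ≤ j := by exact_mod_cast hij
  simp only [layer, mem_preimage, mem_Ioc] at hi hj
  nlinarith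

lemma Gam_zero : Gam b V 0 = Ioo 0 1 ×ˢ V := by
  simp [Gam, Omi]

lemma Gam_mono : Monotone (Gam b V) := fun _ _ hmn =>
  biUnion_subset_biUnion_left fun i hi => by
    simp only [Finset.coe_range, mem_Iio] at hi ⊢; omega

lemma Gam_eq (hV : V ⊆ Ioo 0 b) (n : ℕ) :
    Gam b V n = {z | z.2 ∈ V ∧ -((n : ℝ) * z.2 * b⁻¹) < z.1 ∧ z.1 < 1} := by
  induction n with
  | zero => ext z; simp [Gam_zero, and_comm]
  | succ n ih =>
    rw [Gam, Finset.range_add_one, Finset.set_biUnion_insert, ← Gam, ih, Omi_succ_eq]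
    ext ⟨x, v⟩
    simp only [layer, mem_union, mem_ofPred_eq, mem_Ioc]
    push_cast
    constructor
    · rintro (⟨hv, h1, h2⟩ | ⟨hv, h1, h2⟩) <;> have hc := mul_inv_pos_of_mem hV hv <;>
        have := mul_nonneg (Nat.cast_nonneg n) hc.le <;> exact ⟨hv, by linarith, by linarith⟩
    · rintro ⟨hv, h1, h2⟩
      by_cases hx : x ≤ -(n * v * b⁻¹)
      · exact Or.inl ⟨hv, h1, hx⟩
      · exact Or.inr ⟨hv, not_le.mp hx, h2⟩

lemma iUnion_Gam (hV : V ⊆ Ioo 0 b) : ⋃ n, Gam b V n = Iio 1 ×ˢ V := by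
  simp_rw [Gam_eq hV]
  ext ⟨x, v⟩
  simp only [mem_iUnion, mem_ofPred_eq, mem_prod, mem_Iio]
  refine ⟨fun ⟨n, hv, _, hx⟩ => ⟨hx, hv⟩, fun ⟨hx, hv⟩ => ?_⟩
  have hc := mul_inv_pos_of_mem hV hv
  obtain ⟨n, hn⟩ := exists_nat_gt (-x / (v * b⁻¹))
  refine ⟨n, hv, ?_, hx⟩
  rw [div_lt_iff₀ hc] at hn
  linarith

lemma biUnion_strip_subset (hV : V ⊆ Ioo 0 b) (n : ℕ) :
    ⋃ j ∈ Finset.range n, strip b V j ⊆ Gam b V n ∪ {1} ×ˢ univ := by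
  simp only [iUnion_subset_iff, Finset.mem_range]
  rintro j hj ⟨y, w⟩ ⟨hw, hy⟩
  rw [Gam_eq hV]
  have hc := mul_inv_pos_of_mem hV hw
  have hc1 := mul_inv_lt_one_of_mem hV hw
  have hjn : (j : ℝ) + 1 ≤ n := by exact_mod_cast hj
  simp only [layer, mem_preimage, mem_Ioc] at hy
  rcases eq_or_ne y 1 with rfl | hy1
  · exact Or.inr ⟨rfl, trivial⟩
  · refine Or.inl ⟨hw, by nlinarith, lt_of_le_of_ne (by nlinarith) hy1⟩

end Geometry

section LayerEstimate

variable {b p q : ℝ} {V : Set ℝ} {ν : Measure ℝ} {k : ℝ → ℝ → ℝ}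
  {G : ℝ × ℝ → ℝ≥0∞}

instance (p q : ℝ) (k : ℝ → ℝ → ℝ) (ν : Measure ℝ) [SFinite ν] (V : Set ℝ) (v : ℝ) :
    SFinite (ell p q k ν V v) := by
  unfold ell; infer_instance

def IsBoundarySubsolution (p q : ℝ) (k : ℝ → ℝ → ℝ) (ν : Measure ℝ) (V : Set ℝ)
    (G : ℝ × ℝ → ℝ≥0∞) : Prop :=
  ∀ᵐ v ∂ν.restrict V, ∀ᵐ x ∂volume.restrict (Iic 0),
    G (x, v) ≤ ∫⁻ w, G (1 + x * w * v⁻¹, w) ∂ell p q k ν V v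

lemma lintegral_ell {v : ℝ} (hk : Measurable fun w => k w v) {F : ℝ → ℝ≥0∞}
    (hF : Measurable F) :
    ∫⁻ w, F w ∂ell p q k ν V v =
      ∫⁻ w in V, ENNReal.ofReal (p * w * v⁻¹ * k w v) * F w ∂ν + ENNReal.ofReal q * F v := by
  rw [ell, lintegral_add_measure, lintegral_smul_measure, lintegral_dirac' v hF,
    lintegral_withDensity_eq_lintegral_mul _ (by fun_prop) hF]
  rfl

lemma setLIntegral_layer_comp_mul (hG : Measurable G) (j : ℕ) {v w : ℝ} (hv : 0 < v)
    (hw : 0 < w) :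
    ∫⁻ x in layer b j v, G (1 + x * w * v⁻¹, w) =
      ENNReal.ofReal (w * v⁻¹)⁻¹ * ∫⁻ y in (· - 1) ⁻¹' layer b j w, G (y, w) := by
  have hc : 0 < w * v⁻¹ := by positivity
  have hpre : layer b j v = (fun x => 1 + x * (w * v⁻¹)) ⁻¹' ((· - 1) ⁻¹' layer b j w) := by
    ext x; simp [mul_mem_layer_iff hv hw]
  simp_rw [mul_assoc _ w]
  have hA : MeasurableSet ((· - 1) ⁻¹' layer b j w) :=
    measurableSet_Ioc.preimage (measurable_sub_const 1)
  rw [hpre, setLIntegral_comp_add_mul_right (h := fun y => G (y, w)) (hG.comp (by fun_prop)) hA 1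
    hc.ne', abs_of_pos (inv_pos.mpr hc)]

lemma setLIntegral_layer_le [SFinite ν] (hV : V ⊆ Ioo 0 b) (hVm : MeasurableSet V)
    (hkm : Measurable (Function.uncurry k)) (hG : Measurable G) (j : ℕ) {v : ℝ} (hv : v ∈ V)
    (hGv : ∀ᵐ x ∂volume.restrict (Iic 0),
      G (x, v) ≤ ∫⁻ w, G (1 + x * w * v⁻¹, w) ∂ell p q k ν V v) :
    ∫⁻ x in layer b j v, G (x, v) ≤
      ∫⁻ w in V, ENNReal.ofReal (p * k w v) * (∫⁻ y in (· - 1) ⁻¹' layer b j w, G (y, w)) ∂ν +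
        ENNReal.ofReal q * ∫⁻ y in (· - 1) ⁻¹' layer b j v, G (y, v) := by
  have hv0 := (hV hv).1
  have hkv : Measurable fun w => k w v := hkm.comp (measurable_id.prodMk measurable_const)
  have hGvw : Measurable fun z : ℝ × ℝ => G (1 + z.1 * z.2 * v⁻¹, z.2) := hG.comp (by fun_prop)
  have hF : Measurable fun w => ∫⁻ x in layer b j v, G (1 + x * w * v⁻¹, w) :=
    hGvw.lintegral_prod_left'
  calc ∫⁻ x in layer b j v, G (x, v)
      ≤ ∫⁻ x in layer b j v, (∫⁻ w, G (1 + x * w * v⁻¹, w) ∂ell p q k ν V v) :=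
        lintegral_mono_ae (ae_restrict_of_ae_restrict_of_subset
          (layer_subset_Iic (hv0.trans (hV hv).2).le hv0.le j) hGv)
    _ = ∫⁻ w, (∫⁻ x in layer b j v, G (1 + x * w * v⁻¹, w)) ∂ell p q k ν V v :=
        lintegral_lintegral_swap hGvw.aemeasurable
    _ = ∫⁻ w in V, ENNReal.ofReal (p * w * v⁻¹ * k w v) *
            (∫⁻ x in layer b j v, G (1 + x * w * v⁻¹, w)) ∂ν +
          ENNReal.ofReal q * ∫⁻ x in layer b j v, G (1 + x * v * v⁻¹, v) :=
        lintegral_ell hkv hF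
    _ = _ := by
        congr 1
        · refine setLIntegral_congr_fun hVm fun w hw => ?_
          have hw0 := (hV hw).1
          rw [setLIntegral_layer_comp_mul hG j hv0 hw0, ← mul_assoc,
            ← ENNReal.ofReal_mul' (by positivity)]
          congr 2
          field_simp
        · rw [setLIntegral_layer_comp_mul hG j hv0 hv0, mul_inv_cancel₀ hv0.ne', inv_one,
            ENNReal.ofReal_one, one_mul]

lemma setLIntegral_Omi_succ_le [SFinite ν] (hp : 0 ≤ p) (hq : 0 ≤ q) (hV : V ⊆ Ioo 0 b)
    (hVm : MeasurableSet V) (hkm : Measurable (Function.uncurry k))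
    (hknn : ∀ w v, 0 ≤ k w v) (hk1 : ∀ w ∈ V, ∫ v in V, k w v ∂ν = 1) (hG : Measurable G)
    (hGle : IsBoundarySubsolution p q k ν V G) (j : ℕ) :
    ∫⁻ z in Omi b V (j + 1), G z ∂(volume.prod ν) ≤
      ENNReal.ofReal (p + q) * ∫⁻ z in strip b V j, G z ∂(volume.prod ν) := by
  set H : ℝ → ℝ≥0∞ := fun w => ∫⁻ y in (· - 1) ⁻¹' layer b j w, G (y, w)
  have hH : Measurable H :=
    measurable_setLIntegral_slice (measurableSet_setOf_sub_one_mem_layer j) hG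
  rw [Omi_succ_eq, strip,
    setLIntegral_prod_eq_lintegral_slice (J := layer b j) V (measurableSet_setOf_mem_layer j) hG,
    setLIntegral_prod_eq_lintegral_slice (J := fun w => (· - 1) ⁻¹' layer b j w) V
      (measurableSet_setOf_sub_one_mem_layer j) hG]
  calc ∫⁻ v in V, (∫⁻ x in layer b j v, G (x, v)) ∂ν
      ≤ ∫⁻ v in V, (∫⁻ w in V, ENNReal.ofReal (p * k w v) * H w ∂ν +
          ENNReal.ofReal q * H v) ∂ν := by
        refine lintegral_mono_ae ?_
        filter_upwards [hGle, ae_restrict_mem hVm] with v hv hvV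
        exact setLIntegral_layer_le hV hVm hkm hG j hvV hv
    _ = ENNReal.ofReal p * ∫⁻ w in V, H w ∂ν + ENNReal.ofReal q * ∫⁻ v in V, H v ∂ν := by
        simp_rw [ENNReal.ofReal_mul hp, mul_assoc,
          lintegral_const_mul' _ _ ENNReal.ofReal_ne_top]
        rw [lintegral_add_right _ (hH.const_mul _), lintegral_const_mul' _ _ ENNReal.ofReal_ne_top,
          lintegral_const_mul _ hH, lintegral_lintegral_ofReal_mul_eq hkm hknn
            ((ae_restrict_mem hVm).mono hk1) hH]
    _ = ENNReal.ofReal (p + q) * ∫⁻ w in V, H w ∂ν := by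
        rw [ENNReal.ofReal_add hp hq, add_mul]

end LayerEstimate

lemma le_ofReal_inv_mul_of_le_add_mul {x y : ℝ≥0∞} {r : ℝ} (hr0 : 0 ≤ r) (hr1 : r < 1)
    (hx : x ≠ ∞) (h : x ≤ y + ENNReal.ofReal r * x) : x ≤ ENNReal.ofReal (1 - r)⁻¹ * y := by
  have hsplit : ENNReal.ofReal (1 - r) * x + ENNReal.ofReal r * x = x := by
    rw [← add_mul, ← ENNReal.ofReal_add (by linarith) hr0, sub_add_cancel, ENNReal.ofReal_one,
      one_mul]
  have h1 : ENNReal.ofReal (1 - r) * x ≤ y :=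
    (ENNReal.add_le_add_iff_right (ENNReal.mul_ne_top ENNReal.ofReal_ne_top hx)).mp
      (hsplit.le.trans h)
  calc x = ENNReal.ofReal (1 - r)⁻¹ * (ENNReal.ofReal (1 - r) * x) := by
        rw [← mul_assoc, ← ENNReal.ofReal_mul (inv_nonneg.mpr (by linarith)),
          inv_mul_cancel₀ (by linarith), ENNReal.ofReal_one, one_mul]
    _ ≤ ENNReal.ofReal (1 - r)⁻¹ * y := by gcongr

section Recursion

variable {b p q : ℝ} {V : Set ℝ} {ν : Measure ℝ} [SFinite ν] {k : ℝ → ℝ → ℝ}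
  {G : ℝ × ℝ → ℝ≥0∞}

lemma setLIntegral_Gam_le (hp : 0 ≤ p) (hq : 0 ≤ q) (hV : V ⊆ Ioo 0 b)
    (hVm : MeasurableSet V) (hkm : Measurable (Function.uncurry k))
    (hknn : ∀ w v, 0 ≤ k w v) (hk1 : ∀ w ∈ V, ∫ v in V, k w v ∂ν = 1) (hG : Measurable G)
    (hGle : IsBoundarySubsolution p q k ν V G) (n : ℕ) :
    ∫⁻ z in Gam b V n, G z ∂(volume.prod ν) ≤
      ∫⁻ z in Gam b V 0, G z ∂(volume.prod ν) +
        ENNReal.ofReal (p + q) * ∫⁻ z in Gam b V n, G z ∂(volume.prod ν) := by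
  set μ : Measure (ℝ × ℝ) := volume.prod ν
  have hstrips : ∫⁻ z in ⋃ j ∈ Finset.range n, strip b V j, G z ∂μ ≤
      ∫⁻ z in Gam b V n, G z ∂μ := by
    refine lintegral_mono' (Measure.restrict_mono_ae (ae_le_set.mpr
      (measure_mono_null (sdiff_subset_iff.mpr (biUnion_strip_subset hV n)) ?_))) le_rfl
    rw [Measure.prod_prod, Real.volume_singleton, zero_mul]
  calc ∫⁻ z in Gam b V n, G z ∂μ
      ≤ ∑ i ∈ Finset.range (n + 1), ∫⁻ z in Omi b V i, G z ∂μ := by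
        simp only [← withDensity_apply' G]
        exact measure_biUnion_finset_le _ _
    _ = ∫⁻ z in Gam b V 0, G z ∂μ + ∑ j ∈ Finset.range n, ∫⁻ z in Omi b V (j + 1), G z ∂μ := by
        rw [Finset.sum_range_succ', add_comm, Gam_zero]
        rfl
    _ ≤ ∫⁻ z in Gam b V 0, G z ∂μ +
          ∑ j ∈ Finset.range n, ENNReal.ofReal (p + q) * ∫⁻ z in strip b V j, G z ∂μ := by
        gcongr with j
        exact setLIntegral_Omi_succ_le hp hq hV hVm hkm hknn hk1 hG hGle j
    _ = ∫⁻ z in Gam b V 0, G z ∂μ +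
          ENNReal.ofReal (p + q) * ∫⁻ z in ⋃ j ∈ Finset.range n, strip b V j, G z ∂μ := by
        rw [← Finset.mul_sum, lintegral_biUnion_finset
          ((pairwise_disjoint_strip hV).set_pairwise _) fun j _ => measurableSet_strip hVm j]
    _ ≤ _ := by gcongr

theorem setLIntegral_Iio_prod_le (hp : 0 ≤ p) (hq : 0 ≤ q) (hpq : p + q < 1)
    (hV : V ⊆ Ioo 0 b) (hVm : MeasurableSet V) (hkm : Measurable (Function.uncurry k))
    (hknn : ∀ w v, 0 ≤ k w v) (hk1 : ∀ w ∈ V, ∫ v in V, k w v ∂ν = 1) (hG : Measurable G)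
    (hGle : IsBoundarySubsolution p q k ν V G)
    (hfin : ∀ n, ∫⁻ z in Gam b V n, G z ∂(volume.prod ν) ≠ ∞) :
    ∫⁻ z in Iio 1 ×ˢ V, G z ∂(volume.prod ν) ≤
      ENNReal.ofReal (1 - (p + q))⁻¹ * ∫⁻ z in Ioo 0 1 ×ˢ V, G z ∂(volume.prod ν) := by
  rw [← iUnion_Gam hV, setLIntegral_iUnion_of_directed _ Gam_mono.directed_le, ← Gam_zero (b := b)]
  exact iSup_le fun n => le_ofReal_inv_mul_of_le_add_mul (add_nonneg hp hq) hpq (hfin n)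
    (setLIntegral_Gam_le hp hq hV hVm hkm hknn hk1 hG hGle n)

end Recursion

section BoundaryExtension

variable {b p q : ℝ} {V : Set ℝ} {ν : Measure ℝ} {k : ℝ → ℝ → ℝ}
  {f ftil : ℝ × ℝ → ℝ}

lemma IsBoundaryExtension.ae_eq_restrict (hext : IsBoundaryExtension b p q k ν V f ftil)
    (hVm : MeasurableSet V) : ftil =ᵐ[(volume.prod ν).restrict (Ioo 0 1 ×ˢ V)] f := by
  have hsub : Ioo (0 : ℝ) 1 ×ˢ V ⊆ Iio 1 ×ˢ V := prod_mono Ioo_subset_Iio_self subset_rfl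
  filter_upwards [ae_restrict_of_ae_restrict_of_subset hsub hext.2.2.1,
    ae_restrict_mem (measurableSet_Ioo.prod hVm)] with z hz hmem
  exact hz hmem.1.1

lemma IsBoundaryExtension.isBoundarySubsolution_enorm [SFinite ν]
    (hext : IsBoundaryExtension b p q k ν V f ftil) (hVm : MeasurableSet V) :
    IsBoundarySubsolution p q k ν V fun z => ‖ftil z‖ₑ := by
  have hsub : Iic (0 : ℝ) ×ˢ V ⊆ Iio 1 ×ˢ V := prod_mono (Iic_subset_Iio.mpr one_pos) subset_rfl
  have h : ∀ᵐ z ∂(volume.restrict (Iic 0)).prod (ν.restrict V),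
      ‖ftil z‖ₑ ≤ ∫⁻ w, ‖ftil (1 + z.1 * w * z.2⁻¹, w)‖ₑ ∂ell p q k ν V z.2 := by
    rw [Measure.prod_restrict]
    filter_upwards [ae_restrict_of_ae_restrict_of_subset hsub hext.2.2.2,
      ae_restrict_mem (measurableSet_Iic.prod hVm)] with z hz hmem
    rw [(hz hmem.1).2]
    exact enorm_integral_le_lintegral_enorm _
  exact Measure.ae_ae_of_ae_prod (Measure.measurePreserving_swap.quasiMeasurePreserving.ae h)

end BoundaryExtension

lemma integrableOn_and_integral_abs_le_of_lintegral_enorm_le {α : Type*} [MeasurableSpace α]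
    {μ : Measure α} {f : α → ℝ} {s t : Set α} {c : ℝ} (hc : 0 ≤ c)
    (hf : AEStronglyMeasurable f μ) (ht : ∫⁻ z in t, ‖f z‖ₑ ∂μ ≠ ∞)
    (h : ∫⁻ z in s, ‖f z‖ₑ ∂μ ≤ ENNReal.ofReal c * ∫⁻ z in t, ‖f z‖ₑ ∂μ) :
    IntegrableOn f s μ ∧ ∫ z in s, |f z| ∂μ ≤ c * ∫ z in t, |f z| ∂μ := by
  refine ⟨⟨hf.restrict, h.trans_lt (ENNReal.mul_lt_top ENNReal.ofReal_lt_top ht.lt_top)⟩, ?_⟩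
  simp_rw [← Real.norm_eq_abs, integral_norm_eq_lintegral_enorm hf.restrict]
  rw [← ENNReal.toReal_ofReal hc, ← ENNReal.toReal_mul]
  exact ENNReal.toReal_mono (ENNReal.mul_ne_top ENNReal.ofReal_ne_top ht) h

theorem stmt3_general
    (a b p q : ℝ) (ha : 0 ≤ a)
    (hp : 0 ≤ p) (hq : 0 ≤ q)
    (V : Set ℝ) (hV : V ⊆ Set.Ioo a b) (hVm : MeasurableSet V)
    (ν : Measure ℝ) [SigmaFinite ν]
    (k : ℝ → ℝ → ℝ) (hkm : Measurable (Function.uncurry k))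
    (hknn : ∀ w v : ℝ, 0 ≤ k w v)
    (hk1 : ∀ w ∈ V, ∫ v in V, k w v ∂ν = 1)
    (f ftil : ℝ × ℝ → ℝ)
    (hext : IsBoundaryExtension b p q k ν V f ftil)
    (hpq1 : p + q < 1) :
    IntegrableOn ftil ((Set.Iio (1 : ℝ)) ×ˢ V) ((volume : Measure ℝ).prod ν) ∧
    ∫ z in (Set.Iio (1 : ℝ)) ×ˢ V, |ftil z| ∂((volume : Measure ℝ).prod ν)
      ≤ (1 - p - q)⁻¹ *
        ∫ z in (Set.Ioo (0 : ℝ) 1) ×ˢ V, |f z| ∂((volume : Measure ℝ).prod ν) := by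
  have hV0 : V ⊆ Ioo 0 b := hV.trans (Ioo_subset_Ioo_left ha)
  have hfin : ∀ n, ∫⁻ z in Gam b V n, ‖ftil z‖ₑ ∂(volume.prod ν) ≠ ∞ :=
    fun n => (hext.2.1 n).2.ne
  have hbound := setLIntegral_Iio_prod_le hp hq hpq1 hV0 hVm hkm hknn hk1 hext.1.enorm
    (hext.isBoundarySubsolution_enorm hVm) hfin
  have hf : ∫ z in Ioo 0 1 ×ˢ V, |f z| ∂(volume.prod ν) =
      ∫ z in Ioo 0 1 ×ˢ V, |ftil z| ∂(volume.prod ν) :=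
    integral_congr_ae ((hext.ae_eq_restrict hVm).symm.fun_comp abs)
  rw [hf, sub_sub]
  exact integrableOn_and_integral_abs_le_of_lintegral_enorm_le (inv_nonneg.mpr (by linarith))
    hext.1.aestronglyMeasurable (Gam_zero (b := b) ▸ hfin 0) hbound

theorem stmt3
    (a b p q : ℝ) (ha : 0 ≤ a) (hab : a < b)
    (hp : 0 ≤ p) (hq : 0 ≤ q) (hpq : 0 < p + q)
    (V : Set ℝ) (hV : V ⊆ Set.Ioo a b) (hVm : MeasurableSet V)
    (ν : Measure ℝ) [SigmaFinite ν]
    (k : ℝ → ℝ → ℝ) (hkm : Measurable (Function.uncurry k))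
    (hknn : ∀ w v : ℝ, 0 ≤ k w v)
    (hk1 : ∀ w ∈ V, ∫ v in V, k w v ∂ν = 1)
    (f ftil : ℝ × ℝ → ℝ)
    (hf : IntegrableOn f ((Set.Ioo (0 : ℝ) 1) ×ˢ V) ((volume : Measure ℝ).prod ν))
    (hext : IsBoundaryExtension b p q k ν V f ftil)
    (hpq1 : p + q < 1) :
    IntegrableOn ftil ((Set.Iio (1 : ℝ)) ×ˢ V) ((volume : Measure ℝ).prod ν) ∧
    ∫ z in (Set.Iio (1 : ℝ)) ×ˢ V, |ftil z| ∂((volume : Measure ℝ).prod ν)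
      ≤ (1 - p - q)⁻¹ *
        ∫ z in (Set.Ioo (0 : ℝ) 1) ×ˢ V, |f z| ∂((volume : Measure ℝ).prod ν) :=
  stmt3_general a b p q ha hp hq V hV hVm ν k hkm hknn hk1 f ftil hext hpq1
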